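/- Let C ≥ 2 and let μ_1,…,μ_C ∈ ℝ^d form a centered simplex ETF with radius R > 0, and let P denote the orthogonal projection of ℝ^d onto span(μ_1,…,μ_C). Then for every z ∈ ℝ^d with ‖z‖ = 1, the class-wise variance of squared distances equals Var_c[‖z − μ_c‖²] = (4R²/(C−1))·‖P(z)‖². -/

import Mathlib

open scoped RealInnerProductSpace
open Finset

/-- Variance of a finite family of reals indexed by `Fin C`. -/
noncomputable def varFam {C : ℕ} (a : Fin C → ℝ) : ℝ :=
  (1 / (C : ℝ)) * ∑ c, (a c - (1 / (C : ℝ)) * ∑ c', a c') ^ 2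

/-! Since every `‖μ c‖ = R`, `‖z - μ c‖² = ‖z‖² + R² - 2⟪μ c, z⟫`; the constant drops out of the
variance and `∑ c, μ c = 0` centres the rest, leaving `(4 / C) ∑ c, ⟪μ c, z⟫²`. A simplex ETF is a
tight frame for its span: the frame operator `x ↦ ∑ c, ⟪μ c, x⟫ • μ c` sends each `μ a` to
`R² C / (C - 1) • μ a`, hence is that scalar on the whole span, and `⟪μ c, z⟫ = ⟪μ c, P z⟫` gives
`∑ c, ⟪μ c, z⟫² = R² C / (C - 1) · ‖P z‖²`. -/

section Variance

variable {C : ℕ}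

theorem varFam_add_const (a : Fin C → ℝ) (k : ℝ) : varFam (fun c => a c + k) = varFam a := by
  rcases C.eq_zero_or_pos with rfl | hC
  · simp [varFam]
  have hmean : (1 / (C : ℝ)) * ∑ c, (a c + k) = (1 / (C : ℝ)) * ∑ c, a c + k := by
    rw [sum_add_distrib, sum_const, card_univ, Fintype.card_fin, nsmul_eq_mul]
    field_simp
  simp only [varFam, hmean, add_sub_add_right_eq_sub]

theorem varFam_of_sum_eq_zero {a : Fin C → ℝ} (h : ∑ c, a c = 0) :
    varFam a = (1 / (C : ℝ)) * ∑ c, a c ^ 2 := by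
  simp [varFam, h]

end Variance

structure IsCenteredSimplexETF {E : Type*} [NormedAddCommGroup E] [InnerProductSpace ℝ E]
    {C : ℕ} (μ : Fin C → E) (R : ℝ) : Prop where
  norm_eq : ∀ c, ‖μ c‖ = R
  inner_eq : ∀ c c', c ≠ c' → ⟪μ c, μ c'⟫ = -R ^ 2 / ((C : ℝ) - 1)
  sum_eq_zero : ∑ c, μ c = 0

namespace IsCenteredSimplexETF

variable {E : Type*} [NormedAddCommGroup E] [InnerProductSpace ℝ E]
  {C : ℕ} {μ : Fin C → E} {R : ℝ}

theorem sum_inner_eq_zero (h : IsCenteredSimplexETF μ R) (z : E) : ∑ c, ⟪μ c, z⟫ = 0 := by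
  rw [← sum_inner, h.sum_eq_zero, inner_zero_left]

theorem sum_inner_smul_self (h : IsCenteredSimplexETF μ R) (hC : 2 ≤ C) (a : Fin C) :
    ∑ c, ⟪μ c, μ a⟫ • μ c = (R ^ 2 * C / ((C : ℝ) - 1)) • μ a := by
  have hC1 : (C : ℝ) - 1 ≠ 0 := by
    have : (2 : ℝ) ≤ C := by exact_mod_cast hC
    linarith
  have hothers : ∑ c ∈ univ.erase a, μ c = -μ a := by
    rw [eq_neg_iff_add_eq_zero, add_comm, add_sum_erase _ _ (mem_univ a), h.sum_eq_zero]
  calc ∑ c, ⟪μ c, μ a⟫ • μ c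
      = ⟪μ a, μ a⟫ • μ a + ∑ c ∈ univ.erase a, ⟪μ c, μ a⟫ • μ c :=
        (add_sum_erase _ _ (mem_univ a)).symm
    _ = R ^ 2 • μ a + (-R ^ 2 / ((C : ℝ) - 1)) • ∑ c ∈ univ.erase a, μ c := by
        rw [real_inner_self_eq_norm_sq, h.norm_eq, smul_sum]
        congr 1
        refine sum_congr rfl fun c hc => ?_
        rw [h.inner_eq c a (ne_of_mem_erase hc)]
    _ = (R ^ 2 * C / ((C : ℝ) - 1)) • μ a := by
        rw [hothers, smul_neg, ← neg_smul, ← add_smul]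
        congr 1
        field_simp
        ring

theorem sum_inner_smul_of_mem_span (h : IsCenteredSimplexETF μ R) (hC : 2 ≤ C) {x : E}
    (hx : x ∈ Submodule.span ℝ (Set.range μ)) :
    ∑ c, ⟪μ c, x⟫ • μ c = (R ^ 2 * C / ((C : ℝ) - 1)) • x := by
  let frame : E →ₗ[ℝ] E := ∑ c, (innerₗ E (μ c)).smulRight (μ c)
  have heq : Set.EqOn frame (((R ^ 2 * C / ((C : ℝ) - 1)) • LinearMap.id : E →ₗ[ℝ] E)) (Set.range μ) := by
    rintro _ ⟨a, rfl⟩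
    simpa [frame] using h.sum_inner_smul_self hC a
  simpa [frame] using LinearMap.eqOn_span' heq hx

theorem sum_inner_sq_of_mem_span (h : IsCenteredSimplexETF μ R) (hC : 2 ≤ C) {x : E}
    (hx : x ∈ Submodule.span ℝ (Set.range μ)) :
    ∑ c, ⟪μ c, x⟫ ^ 2 = R ^ 2 * C / ((C : ℝ) - 1) * ‖x‖ ^ 2 := by
  calc ∑ c, ⟪μ c, x⟫ ^ 2 = ⟪∑ c, ⟪μ c, x⟫ • μ c, x⟫ := by
        simp only [sum_inner, real_inner_smul_left, sq]
    _ = R ^ 2 * C / ((C : ℝ) - 1) * ‖x‖ ^ 2 := by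
        rw [h.sum_inner_smul_of_mem_span hC hx, real_inner_smul_left, real_inner_self_eq_norm_sq]

theorem sum_inner_sq_eq_norm_starProjection_sq (h : IsCenteredSimplexETF μ R) (hC : 2 ≤ C)
    [(Submodule.span ℝ (Set.range μ)).HasOrthogonalProjection] (z : E) :
    ∑ c, ⟪μ c, z⟫ ^ 2
      = R ^ 2 * C / ((C : ℝ) - 1) * ‖(Submodule.span ℝ (Set.range μ)).starProjection z‖ ^ 2 := by
  set K := Submodule.span ℝ (Set.range μ)
  have hproj : ∀ c, ⟪μ c, z⟫ = ⟪μ c, K.starProjection z⟫ := fun c => by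
    rw [← K.inner_starProjection_left_eq_right,
      K.starProjection_eq_self_iff.mpr (Submodule.subset_span ⟨c, rfl⟩)]
  simp only [hproj]
  exact h.sum_inner_sq_of_mem_span hC (K.starProjection_apply_mem z)

end IsCenteredSimplexETF

theorem variance_equals_projection_norm {d C : ℕ} (hC : 2 ≤ C) (R : ℝ)
    (μ : Fin C → EuclideanSpace ℝ (Fin d))
    (hnorm : ∀ c, ‖μ c‖ = R)
    (hangle : ∀ c c', c ≠ c' → ⟪μ c, μ c'⟫ = -R ^ 2 / ((C : ℝ) - 1))
    (hsum : ∑ c, μ c = 0)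
    (z : EuclideanSpace ℝ (Fin d)) :
    varFam (fun c => ‖z - μ c‖ ^ 2)
      = (4 * R ^ 2 / ((C : ℝ) - 1)) *
        ‖(Submodule.orthogonalProjection (Submodule.span ℝ (Set.range μ)) z :
          EuclideanSpace ℝ (Fin d))‖ ^ 2 := by
  have hETF : IsCenteredSimplexETF μ R := ⟨hnorm, hangle, hsum⟩
  have hdist : (fun c => ‖z - μ c‖ ^ 2) = fun c => -2 * ⟪μ c, z⟫ + (‖z‖ ^ 2 + R ^ 2) := by
    ext c
    rw [norm_sub_sq_real, hnorm, real_inner_comm]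
    ring
  have hcentered : ∑ c, -2 * ⟪μ c, z⟫ = 0 := by
    rw [← mul_sum, hETF.sum_inner_eq_zero, mul_zero]
  have hC0 : (C : ℝ) ≠ 0 := Nat.cast_ne_zero.mpr (by omega)
  rw [hdist, varFam_add_const, varFam_of_sum_eq_zero hcentered,
    Submodule.coe_orthogonalProjectionOnto_apply]
  simp only [mul_pow, ← mul_sum, hETF.sum_inner_sq_eq_norm_starProjection_sq hC]
  field_simp
  ring
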